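/- Let V be in the class 𝒞 with growth exponent K, and for a ∈ ℝ set W_a(u) = V(a+u) + V(a−u) − 2V(a) and Z(a) = ∫_ℝ e^{−W_a(u)} du. Then there exists a constant C > 0 (depending only on V) such that Z(a) ≥ 1/(C·max(1,|a|^K)) for all a ∈ ℝ, and consequently the sup-norm of the resampling density satisfies ‖ρ_{b,c}‖_∞ ≤ C·max(1,|c−b|^K) for all b, c ∈ ℝ. -/

import Mathlib

open MeasureTheory Filter Real

noncomputable section

/-- The class 𝒞 of potentials: convex, at most polynomial growth, non-affine
(the asymptotic slopes at `+∞` and `-∞`, taken in the extended reals, differ). -/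
structure InClassC (V : ℝ → ℝ) : Prop where
  convex : ConvexOn ℝ Set.univ V
  growth : ∃ C > (0 : ℝ), ∃ K : ℝ, 1 ≤ K ∧ ∀ x : ℝ, |V x| ≤ C * (1 + |x|) ^ K
  slopes : ∃ vm vp : EReal,
    Tendsto (fun x : ℝ => ((V x / x : ℝ) : EReal)) atBot (nhds vm) ∧
    Tendsto (fun x : ℝ => ((V x / x : ℝ) : EReal)) atTop (nhds vp) ∧
    vm < vp

/-- The resampling density `ρ_{b,c}`. -/
def rho (V : ℝ → ℝ) (b c u : ℝ) : ℝ :=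
  Real.exp (-(V (u - b) + V (c - u))) / ∫ s : ℝ, Real.exp (-(V (s - b) + V (c - s)))

/-- The symmetrized resampling potential `W_a(u) = V(a+u) + V(a-u) - 2V(a)`. -/
def Wfun (V : ℝ → ℝ) (a u : ℝ) : ℝ := V (a + u) + V (a - u) - 2 * V a

/-- Its partition function `Z(a) = ∫ e^{-W_a(u)} du`. -/
def Zfun (V : ℝ → ℝ) (a : ℝ) : ℝ := ∫ u : ℝ, Real.exp (-(Wfun V a u))

/-
`W_a` is convex, even, nonnegative and vanishes at `0`. It is not identically zero, since
otherwise `V` would be affine, so it grows at least linearly and `e^{-W_a}` is integrable.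
Convexity gives `W_a(u) ≤ u W_a(1)` on `[0, 1]`, and the growth bound gives
`W_a(1) = O(max(1, |a|^K))`, so `e^{-W_a} ≥ e^{-1}` on an interval of length of order
`1 / max(1, |a|^K)`. Finally `ρ_{b,c}(u) = e^{-W_a(u - m)} / Z(a)` with `a = (c - b)/2` and
`m = (c + b)/2`, and `W_a ≥ 0` gives `ρ_{b,c} ≤ 1 / Z(a)`.
-/

open Set

theorem ConvexOn.apply_mul_le_mul_of_apply_zero {f : ℝ → ℝ} (hf : ConvexOn ℝ univ f)
    (hf0 : f 0 = 0) {t : ℝ} (ht0 : 0 ≤ t) (ht1 : t ≤ 1) (x : ℝ) : f (t * x) ≤ t * f x := by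
  simpa [hf0] using hf.2 (mem_univ x) (mem_univ 0) ht0 (sub_nonneg.2 ht1) (by ring)

section Wfun

variable {V : ℝ → ℝ}

theorem Wfun_zero (V : ℝ → ℝ) (a : ℝ) : Wfun V a 0 = 0 := by
  simp only [Wfun, add_zero, sub_zero]; ring

theorem Wfun_neg (V : ℝ → ℝ) (a u : ℝ) : Wfun V a (-u) = Wfun V a u := by
  simp only [Wfun, sub_neg_eq_add, ← sub_eq_add_neg]; ring

theorem Wfun_abs (V : ℝ → ℝ) (a u : ℝ) : Wfun V a |u| = Wfun V a u := by
  rcases abs_choice u with h | h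
  · rw [h]
  · rw [h, Wfun_neg]

theorem convexOn_Wfun (hV : ConvexOn ℝ univ V) (a : ℝ) : ConvexOn ℝ univ (Wfun V a) := by
  have hplus : ConvexOn ℝ univ fun u => V (a + u) := hV.translate_right a
  have hminus : ConvexOn ℝ univ fun u => V (a - u) := by
    simpa [Function.comp_def, sub_eq_add_neg, add_comm] using
      (hV.comp_linearMap (-LinearMap.id)).translate_right (-a)
  refine ((hplus.add hminus).add_const (-(2 * V a))).congr fun u _ => ?_
  simp only [Wfun, Pi.add_apply]
  ring

theorem Wfun_nonneg (hV : ConvexOn ℝ univ V) (a u : ℝ) : 0 ≤ Wfun V a u := by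
  have h := (convexOn_Wfun hV a).2 (mem_univ u) (mem_univ (-u)) (by norm_num : (0 : ℝ) ≤ 1 / 2)
    (by norm_num : (0 : ℝ) ≤ 1 / 2) (by norm_num)
  simp only [smul_eq_mul, mul_neg, add_neg_cancel, Wfun_zero, Wfun_neg] at h
  linarith

theorem Wfun_le_mul_Wfun_one (hV : ConvexOn ℝ univ V) (a : ℝ) {u : ℝ} (hu0 : 0 ≤ u)
    (hu1 : u ≤ 1) : Wfun V a u ≤ u * Wfun V a 1 := by
  simpa using (convexOn_Wfun hV a).apply_mul_le_mul_of_apply_zero (Wfun_zero V a) hu0 hu1 1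

theorem mul_sub_one_le_Wfun (hV : ConvexOn ℝ univ V) (a : ℝ) {r : ℝ} (hr : 0 < r) (u : ℝ) :
    Wfun V a r * (|u| / r - 1) ≤ Wfun V a u := by
  rcases le_total |u| r with hu | hu
  · have : |u| / r - 1 ≤ 0 := by rw [sub_nonpos, div_le_one hr]; exact hu
    exact (mul_nonpos_of_nonneg_of_nonpos (Wfun_nonneg hV a r) this).trans (Wfun_nonneg hV a u)
  · have hu0 : 0 < |u| := hr.trans_le hu
    have h := (convexOn_Wfun hV a).apply_mul_le_mul_of_apply_zero (Wfun_zero V a)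
      (div_nonneg hr.le hu0.le) ((div_le_one hu0).2 hu) |u|
    rw [div_mul_cancel₀ r hu0.ne', Wfun_abs] at h
    have h' : Wfun V a r * (|u| / r) ≤ Wfun V a u :=
      calc Wfun V a r * (|u| / r) ≤ r / |u| * Wfun V a u * (|u| / r) := by gcongr
        _ = Wfun V a u := by field_simp
    rw [mul_sub_one]
    linarith [Wfun_nonneg hV a r]

/-- A convex `V` whose `W_a` vanishes identically is affine: the secant slopes of `V` from `a`
are monotone and, by the symmetry of `V` about `a`, even, hence constant. -/
theorem ConvexOn.eq_affine_of_Wfun_eq_zero (hV : ConvexOn ℝ univ V) {a : ℝ}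
    (h : ∀ u, Wfun V a u = 0) (x : ℝ) : V x = V a + (V (a + 1) - V a) * (x - a) := by
  have hslope_symm : ∀ u ≠ 0, slope V a (a - u) = slope V a (a + u) := by
    intro u hu
    have := h u
    simp only [Wfun] at this
    rw [slope_def_field, slope_def_field, show a - u - a = -u by ring,
      show a + u - a = u by ring, div_neg, ← neg_div]
    congr 1
    linarith
  have hmono : ∀ {x y}, x ≠ a → y ≠ a → x ≤ y → slope V a x ≤ slope V a y := by
    intro x y hx hy hxy
    simpa only [slope_def_field] using
      hV.secant_mono (mem_univ a) (mem_univ x) (mem_univ y) hx hy hxy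
  have hslope_const : ∀ u > 0, slope V a (a + u) = slope V a (a + 1) := by
    intro u hu
    apply le_antisymm
    · rw [← hslope_symm u hu.ne']
      exact hmono (by linarith) (by linarith) (by linarith)
    · rw [← hslope_symm 1 one_ne_zero]
      exact hmono (by linarith) (by linarith) (by linarith)
  have hslope : x ≠ a → slope V a x = slope V a (a + 1) := by
    intro hx
    rcases hx.lt_or_gt with hx | hx
    · rw [← hslope_const (a - x) (by linarith), ← hslope_symm (a - x) (by linarith),
        sub_sub_cancel]
    · rw [← hslope_const (x - a) (by linarith), add_sub_cancel]
  rcases eq_or_ne x a with rfl | hx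
  · ring
  have := sub_smul_slope V a x
  rw [hslope hx, slope_def_field, add_sub_cancel_left, div_one, smul_eq_mul, vsub_eq_sub] at this
  linarith

theorem InClassC.not_affine (hV : InClassC V) (m c : ℝ) : ¬ ∀ x, V x = m * x + c := by
  intro hlin
  obtain ⟨vm, vp, hvm, hvp, hlt⟩ := hV.slopes
  have hslope : ∀ x ≠ 0, V x / x = m + c / x := fun x hx => by
    rw [hlin, add_div, mul_div_cancel_right₀ m hx]
  have hlim : ∀ l : Filter ℝ, Tendsto (fun x => c / x) l (nhds 0) → (∀ᶠ x in l, x ≠ 0) →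
      Tendsto (fun x => ((V x / x : ℝ) : EReal)) l (nhds (m : EReal)) := by
    intro l hl hl0
    have := (tendsto_const_nhds (x := m)).add hl
    rw [add_zero] at this
    exact EReal.tendsto_coe.2 (this.congr' (hl0.mono fun x hx => (hslope x hx).symm))
  rw [tendsto_nhds_unique hvm (hlim atBot (tendsto_id.const_div_atBot c)
      ((eventually_lt_atBot 0).mono fun _ => ne_of_lt)),
    tendsto_nhds_unique hvp (hlim atTop (tendsto_id.const_div_atTop c)
      ((eventually_gt_atTop 0).mono fun _ => ne_of_gt))] at hlt
  exact hlt.false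

theorem InClassC.exists_Wfun_pos (hV : InClassC V) (a : ℝ) : ∃ r > 0, 0 < Wfun V a r := by
  obtain ⟨u, hu⟩ : ∃ u, Wfun V a u ≠ 0 := by
    by_contra! h
    refine hV.not_affine (V (a + 1) - V a) (V a - (V (a + 1) - V a) * a) fun x => ?_
    rw [hV.convex.eq_affine_of_Wfun_eq_zero h x]
    ring
  have hu0 : u ≠ 0 := by rintro rfl; exact hu (Wfun_zero V a)
  exact ⟨|u|, abs_pos.2 hu0, (Wfun_abs V a u).symm ▸ (Wfun_nonneg hV.convex a u).lt_of_ne' hu⟩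

theorem integrable_exp_neg_mul_abs {b : ℝ} (hb : 0 < b) :
    Integrable fun u : ℝ => exp (-b * |u|) := by
  have hIci : IntegrableOn (fun u : ℝ => exp (-b * |u|)) (Ici 0) := by
    rw [integrableOn_Ici_iff_integrableOn_Ioi]
    refine (exp_neg_integrableOn_Ioi 0 hb).congr_fun (fun x hx => ?_) measurableSet_Ioi
    simp only [abs_of_pos (mem_Ioi.1 hx)]
  rw [← integrableOn_univ, ← Iio_union_Ici (a := (0 : ℝ)), integrableOn_union]
  refine ⟨?_, hIci⟩
  rw [← (Measure.measurePreserving_neg (volume : Measure ℝ)).integrableOn_comp_preimage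
      (Homeomorph.neg ℝ).measurableEmbedding]
  simpa only [Function.comp_def, abs_neg, neg_preimage, neg_Iio, neg_zero] using
    hIci.mono_set Ioi_subset_Ici_self

theorem InClassC.integrable_exp_neg_Wfun (hV : InClassC V) (a : ℝ) :
    Integrable fun u => exp (-Wfun V a u) := by
  obtain ⟨r, hr, hWr⟩ := hV.exists_Wfun_pos a
  have hcont : Continuous (Wfun V a) :=
    continuousOn_univ.1 ((convexOn_Wfun hV.convex a).continuousOn isOpen_univ)
  refine ((integrable_exp_neg_mul_abs (div_pos hWr hr)).const_mul (exp (Wfun V a r))).mono'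
    (by fun_prop) (Eventually.of_forall fun u => ?_)
  rw [norm_of_nonneg (exp_pos _).le, ← exp_add, exp_le_exp]
  have hlin := mul_sub_one_le_Wfun hV.convex a hr u
  have hexpand : Wfun V a r * (|u| / r - 1) = Wfun V a r / r * |u| - Wfun V a r := by ring
  linarith

theorem InClassC.exp_neg_one_div_le_Zfun (hV : InClassC V) {a D : ℝ} (hD : 1 ≤ D)
    (hW : Wfun V a 1 ≤ D) : exp (-1) / D ≤ Zfun V a := by
  have hD0 : 0 < D := one_pos.trans_le hD
  have hint := hV.integrable_exp_neg_Wfun a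
  have hW_le_one : ∀ u ∈ Icc 0 (1 / D), exp (-1) ≤ exp (-Wfun V a u) := by
    rintro u ⟨hu0, huD⟩
    have huD' : u * D ≤ 1 := (le_div_iff₀ hD0).1 huD
    have hu1 : u ≤ 1 := huD.trans ((div_le_one hD0).2 hD)
    rw [exp_le_exp, neg_le_neg_iff]
    calc Wfun V a u ≤ u * Wfun V a 1 := Wfun_le_mul_Wfun_one hV.convex a hu0 hu1
      _ ≤ u * D := by gcongr
      _ ≤ 1 := huD'
  calc exp (-1) / D = exp (-1) * volume.real (Icc 0 (1 / D)) := by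
        rw [volume_real_Icc_of_le (by positivity), sub_zero, div_eq_mul_one_div]
    _ ≤ ∫ u in Icc 0 (1 / D), exp (-Wfun V a u) :=
        setIntegral_ge_of_const_le_real measurableSet_Icc measure_Icc_lt_top.ne hW_le_one
          hint.integrableOn
    _ ≤ Zfun V a := setIntegral_le_integral hint (Eventually.of_forall fun _ => (exp_pos _).le)

end Wfun

theorem one_add_abs_rpow_le {a x K : ℝ} (hK : 0 ≤ K) (hx : |x - a| ≤ 1) :
    (1 + |x|) ^ K ≤ 3 ^ K * max 1 (|a| ^ K) := by
  have hxa : 1 + |x| ≤ 3 * max 1 |a| := by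
    have := abs_sub_abs_le_abs_sub x a
    have := le_max_left 1 |a|
    have := le_max_right 1 |a|
    linarith
  calc (1 + |x|) ^ K ≤ (3 * max 1 |a|) ^ K := by gcongr
    _ = 3 ^ K * max 1 (|a| ^ K) := by
        rw [mul_rpow (by norm_num) (by positivity), rpow_max zero_le_one (abs_nonneg a) hK,
          one_rpow]

theorem Wfun_one_le {V : ℝ → ℝ} {C₀ K : ℝ} (hK : 0 ≤ K)
    (hgrowth : ∀ x, |V x| ≤ C₀ * (1 + |x|) ^ K) (a : ℝ) :
    Wfun V a 1 ≤ 4 * C₀ * 3 ^ K * max 1 (|a| ^ K) := by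
  have hC₀ : 0 ≤ C₀ := by simpa using (abs_nonneg _).trans (hgrowth 0)
  have hbound : ∀ x, |x - a| ≤ 1 → |V x| ≤ C₀ * (3 ^ K * max 1 (|a| ^ K)) := fun x hx =>
    (hgrowth x).trans (by gcongr; exact one_add_abs_rpow_le hK hx)
  have hright := hbound (a + 1) (by simp)
  have hleft := hbound (a - 1) (by simp)
  have hmid := hbound a (by simp)
  rw [Wfun]
  linarith [le_abs_self (V (a + 1)), le_abs_self (V (a - 1)), neg_abs_le (V a)]

theorem InClassC.one_div_le_Zfun {V : ℝ → ℝ} (hV : InClassC V) {C₀ K : ℝ} (hK : 0 ≤ K)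
    (hgrowth : ∀ x, |V x| ≤ C₀ * (1 + |x|) ^ K) (a : ℝ) :
    1 / (exp 1 * max 1 (4 * C₀ * 3 ^ K) * max 1 (|a| ^ K)) ≤ Zfun V a := by
  have hD : 1 ≤ max 1 (4 * C₀ * 3 ^ K) * max 1 (|a| ^ K) :=
    one_le_mul_of_one_le_of_one_le (le_max_left _ _) (le_max_left _ _)
  have hW : Wfun V a 1 ≤ max 1 (4 * C₀ * 3 ^ K) * max 1 (|a| ^ K) :=
    (Wfun_one_le hK hgrowth a).trans (by gcongr; exact le_max_right _ _)
  convert hV.exp_neg_one_div_le_Zfun hD hW using 1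
  rw [exp_neg, mul_assoc, div_mul_eq_div_div, one_div]

theorem rho_eq_exp_neg_Wfun_div_Zfun (V : ℝ → ℝ) (b c u : ℝ) :
    rho V b c u = exp (-Wfun V ((c - b) / 2) (u - (c + b) / 2)) / Zfun V ((c - b) / 2) := by
  have hsplit : ∀ s, exp (-(V (s - b) + V (c - s))) =
      exp (-(2 * V ((c - b) / 2))) * exp (-Wfun V ((c - b) / 2) (s - (c + b) / 2)) := by
    intro s
    rw [← exp_add, Wfun]
    ring_nf
  have hZ : ∫ s, exp (-Wfun V ((c - b) / 2) (s - (c + b) / 2)) = Zfun V ((c - b) / 2) :=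
    integral_sub_right_eq_self (fun s => exp (-Wfun V ((c - b) / 2) s)) _
  simp only [rho, hsplit, integral_const_mul, hZ]
  exact mul_div_mul_left _ _ (exp_pos _).ne'

theorem rho_le_one_div_Zfun {V : ℝ → ℝ} (hV : ConvexOn ℝ univ V) (b c u : ℝ) :
    rho V b c u ≤ 1 / Zfun V ((c - b) / 2) := by
  rw [rho_eq_exp_neg_Wfun_div_Zfun]
  exact div_le_div_of_nonneg_right (exp_le_one_iff.2 (neg_nonpos.2 (Wfun_nonneg hV _ _)))
    (integral_nonneg fun _ => (exp_pos _).le)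

/-- **Lower bound on `Z(a)` and sup-norm bound on the resampling density.** For `V ∈ 𝒞` with
growth exponent `K`, there is `C > 0` with `Z(a) ≥ 1/(C max(1,|a|^K))`, and consequently
`‖ρ_{b,c}‖_∞ ≤ C max(1, |c-b|^K)`. -/
theorem partition_function_lower_bound (V : ℝ → ℝ) (hV : InClassC V)
    (K : ℝ) (hK : 1 ≤ K) (hgrowth : ∃ C > (0 : ℝ), ∀ x : ℝ, |V x| ≤ C * (1 + |x|) ^ K) :
    ∃ C > (0 : ℝ),
      (∀ a : ℝ, 1 / (C * max 1 (|a| ^ K)) ≤ Zfun V a) ∧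
      (∀ b c u : ℝ, rho V b c u ≤ C * max 1 (|c - b| ^ K)) := by
  obtain ⟨C₀, -, hC₀⟩ := hgrowth
  have hZ := hV.one_div_le_Zfun (zero_le_one.trans hK) hC₀
  refine ⟨exp 1 * max 1 (4 * C₀ * 3 ^ K), by positivity, hZ, fun b c u => ?_⟩
  have hhalf : |(c - b) / 2| ≤ |c - b| := by
    rw [abs_div, abs_two]; exact half_le_self (abs_nonneg _)
  calc rho V b c u ≤ 1 / Zfun V ((c - b) / 2) := rho_le_one_div_Zfun hV.convex b c u
    _ ≤ exp 1 * max 1 (4 * C₀ * 3 ^ K) * max 1 (|(c - b) / 2| ^ K) := by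
        simpa using one_div_le_one_div_of_le (by positivity) (hZ ((c - b) / 2))
    _ ≤ exp 1 * max 1 (4 * C₀ * 3 ^ K) * max 1 (|c - b| ^ K) := by
        gcongr

end
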